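/- arXiv:2001.02460 — 4 statements merged into one kernel-verified Lean document; each statement's English description precedes it below -/
import Mathlib

section
/- Let p_t(x) = (2πt)^{-1/2} exp(−x²/(2t)) be the heat kernel. For every t > 0 and every h ∈ ℝ, ∫₀ᵗ ∫_ℝ (p_s(v+h) − p_s(v))² dv ds = (2/π) ∫₀^∞ (1 − e^{−t ξ²}) (1 − cos(|h| ξ))/ξ² dξ. -/
/-- The standard heat kernel `p_t(x) = (2πt)^{-1/2} exp(-x²/(2t))`. -/
noncomputable def heatKernel (t x : ℝ) : ℝ :=
  (1 / Real.sqrt (2 * Real.pi * t)) * Real.exp (-x ^ 2 / (2 * t))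

/-!
By the semigroup identity `∫ p_s(v + h) p_s(v) dv = p_{2s}(h)`, the inner integral equals
`2 (p_{2s}(0) - p_{2s}(h))`. The Fourier representation of the Gaussian,
`p_{2s}(x) = π⁻¹ ∫₀^∞ e^{-sξ²} cos(xξ) dξ`, turns this into
`(2/π) ∫₀^∞ e^{-sξ²} (1 - cos(hξ)) dξ`. This ξ-integral is `O(s^{-1/2})`, so Fubini applies on
`(0, t] × (0, ∞)`, and `∫₀ᵗ e^{-sξ²} ds = (1 - e^{-tξ²}) / ξ²`.
-/

open Real MeasureTheory Set ProbabilityTheory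

lemma heatKernel_eq_gaussianPDFReal {t : ℝ} (ht : 0 ≤ t) :
    heatKernel t = gaussianPDFReal 0 t.toNNReal := by
  ext x
  simp [heatKernel, gaussianPDFReal, Real.coe_toNNReal _ ht]

lemma integrable_heatKernel {t : ℝ} (ht : 0 ≤ t) : Integrable (heatKernel t) := by
  rw [heatKernel_eq_gaussianPDFReal ht]
  exact integrable_gaussianPDFReal _ _

lemma integral_heatKernel {t : ℝ} (ht : 0 < t) : ∫ x, heatKernel t x = 1 := by
  rw [heatKernel_eq_gaussianPDFReal ht.le]
  exact integral_gaussianPDFReal_eq_one _ (by simpa using ht)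

lemma heatKernel_abs (t x : ℝ) : heatKernel t |x| = heatKernel t x := by
  simp only [heatKernel, sq_abs]

lemma heatKernel_mul_heatKernel {s : ℝ} (hs : 0 < s) (x y : ℝ) :
    heatKernel s x * heatKernel s y
      = heatKernel (2 * s) (x - y) * heatKernel (s / 2) ((x + y) / 2) := by
  have hsqrt : √(2 * π * s) * √(2 * π * s) = √(2 * π * (2 * s)) * √(2 * π * (s / 2)) := by
    rw [← sqrt_mul (by positivity), ← sqrt_mul (by positivity)]
    ring_nf
  simp only [heatKernel, one_div]
  rw [mul_mul_mul_comm, mul_mul_mul_comm _ (exp _), ← mul_inv, ← mul_inv, ← exp_add, ← exp_add,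
    hsqrt]
  congr 2
  field_simp
  ring

lemma heatKernel_add_mul_heatKernel {s : ℝ} (hs : 0 < s) (h : ℝ) :
    (fun v => heatKernel s (v + h) * heatKernel s v)
      = fun v => heatKernel (2 * s) h * heatKernel (s / 2) (v + h / 2) := by
  ext v
  rw [heatKernel_mul_heatKernel hs]
  ring_nf

lemma integrable_heatKernel_add_mul_heatKernel {s : ℝ} (hs : 0 < s) (h : ℝ) :
    Integrable fun v => heatKernel s (v + h) * heatKernel s v := by
  rw [heatKernel_add_mul_heatKernel hs]
  exact ((integrable_heatKernel (by positivity)).comp_add_right _).const_mul _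

lemma integral_heatKernel_add_mul_heatKernel {s : ℝ} (hs : 0 < s) (h : ℝ) :
    ∫ v, heatKernel s (v + h) * heatKernel s v = heatKernel (2 * s) h := by
  rw [heatKernel_add_mul_heatKernel hs, integral_const_mul,
    integral_add_right_eq_self (heatKernel (s / 2)), integral_heatKernel (by positivity), mul_one]

lemma integral_sq_heatKernel_add_sub {s : ℝ} (hs : 0 < s) (h : ℝ) :
    ∫ v, (heatKernel s (v + h) - heatKernel s v) ^ 2
      = 2 * (heatKernel (2 * s) 0 - heatKernel (2 * s) h) := by
  have hdiag : ∫ v, heatKernel s v * heatKernel s v = heatKernel (2 * s) 0 := by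
    simpa using integral_heatKernel_add_mul_heatKernel hs 0
  have hdiag_int : Integrable fun v => heatKernel s v * heatKernel s v := by
    simpa using integrable_heatKernel_add_mul_heatKernel hs 0
  have hexpand (v : ℝ) : (heatKernel s (v + h) - heatKernel s v) ^ 2
      = heatKernel s (v + h) * heatKernel s (v + h) + heatKernel s v * heatKernel s v
        - 2 * (heatKernel s (v + h) * heatKernel s v) := by ring
  simp_rw [hexpand]
  have hshift_int := hdiag_int.comp_add_right h
  rw [integral_sub (by exact hshift_int.add hdiag_int)
      ((integrable_heatKernel_add_mul_heatKernel hs h).const_mul 2),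
    integral_add hshift_int hdiag_int, integral_const_mul,
    integral_add_right_eq_self (fun v => heatKernel s v * heatKernel s v), hdiag,
    integral_heatKernel_add_mul_heatKernel hs]
  ring

lemma integrable_exp_neg_mul_sq_mul_cos {s : ℝ} (hs : 0 < s) (a : ℝ) :
    Integrable fun x => exp (-s * x ^ 2) * cos (a * x) :=
  (integrable_exp_neg_mul_sq hs).mul_bdd (by fun_prop)
    (ae_of_all _ fun x => abs_cos_le_one _)

lemma integral_exp_neg_mul_sq_mul_cos {s : ℝ} (hs : 0 < s) (a : ℝ) :
    ∫ x, exp (-s * x ^ 2) * cos (a * x) = √(π / s) * exp (-a ^ 2 / (4 * s)) := by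
  let F : ℝ → ℂ := fun x => Complex.exp (Complex.I * a * x) * Complex.exp (-s * x ^ 2)
  have hF_re (x : ℝ) : (F x).re = exp (-s * x ^ 2) * cos (a * x) := by
    simp only [F]
    rw [show Complex.I * a * x = ((a * x : ℝ) : ℂ) * Complex.I by push_cast; ring,
      show -(s : ℂ) * x ^ 2 = ((-s * x ^ 2 : ℝ) : ℂ) by push_cast; ring,
      ← Complex.ofReal_exp, Complex.re_mul_ofReal, Complex.exp_ofReal_mul_I_re, mul_comm]
  have hF_int : Integrable F := by
    refine (integrable_cexp_quadratic (b := (s : ℂ)) (by simpa using hs) (Complex.I * a) 0).congr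
      (ae_of_all _ fun x => ?_)
    simp only [F, ← Complex.exp_add]
    ring_nf
  have hF : ∫ x, F x = ((√(π / s) * exp (-a ^ 2 / (4 * s)) : ℝ) : ℂ) := by
    rw [fourierIntegral_gaussian (by simpa using hs), sqrt_eq_rpow, Complex.ofReal_mul,
      Complex.ofReal_cpow (by positivity), Complex.ofReal_exp]
    push_cast
    ring_nf
  calc ∫ x, exp (-s * x ^ 2) * cos (a * x) = ∫ x, (F x).re := by simp_rw [hF_re]
    _ = (∫ x, F x).re := integral_re hF_int
    _ = √(π / s) * exp (-a ^ 2 / (4 * s)) := by rw [hF, Complex.ofReal_re]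

lemma integral_Ioi_exp_neg_mul_sq_mul_cos {s : ℝ} (hs : 0 < s) (a : ℝ) :
    ∫ x in Ioi 0, exp (-s * x ^ 2) * cos (a * x) = √(π / s) / 2 * exp (-a ^ 2 / (4 * s)) := by
  have hcos (x : ℝ) : cos (a * |x|) = cos (a * x) := by
    rcases abs_choice x with hx | hx <;> simp [hx]
  have h := integral_comp_abs (f := fun x => exp (-s * x ^ 2) * cos (a * x))
  simp only [sq_abs, hcos, integral_exp_neg_mul_sq_mul_cos hs] at h
  linarith

lemma heatKernel_eq_integral_Ioi_cos {t : ℝ} (ht : 0 < t) (x : ℝ) :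
    heatKernel t x = π⁻¹ * ∫ ξ in Ioi 0, exp (-(t / 2) * ξ ^ 2) * cos (x * ξ) := by
  have hsqrt : √(2 * π / t) * √(2 * π * t) = 2 * π := by
    rw [← sqrt_mul (by positivity), show 2 * π / t * (2 * π * t) = (2 * π) ^ 2 by field_simp,
      sqrt_sq (by positivity)]
  rw [integral_Ioi_exp_neg_mul_sq_mul_cos (by positivity), heatKernel,
    show π / (t / 2) = 2 * π / t by field_simp, show 4 * (t / 2) = 2 * t by ring]
  field_simp
  linear_combination -hsqrt

lemma integral_sq_heatKernel_add_sub_eq_integral_Ioi {s : ℝ} (hs : 0 < s) (h : ℝ) :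
    ∫ v, (heatKernel s (v + h) - heatKernel s v) ^ 2
      = 2 / π * ∫ ξ in Ioi 0, exp (-s * ξ ^ 2) * (1 - cos (|h| * ξ)) := by
  have hcos_int (a : ℝ) : IntegrableOn (fun ξ => exp (-s * ξ ^ 2) * cos (a * ξ)) (Ioi 0) :=
    (integrable_exp_neg_mul_sq_mul_cos hs a).integrableOn
  have hspectral (a : ℝ) : heatKernel (2 * s) a
      = π⁻¹ * ∫ ξ in Ioi 0, exp (-s * ξ ^ 2) * cos (a * ξ) := by
    rw [heatKernel_eq_integral_Ioi_cos (by positivity), mul_div_cancel_left₀ _ two_ne_zero]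
  have hspectral_zero : heatKernel (2 * s) 0 = π⁻¹ * ∫ ξ in Ioi 0, exp (-s * ξ ^ 2) := by
    simpa using hspectral 0
  simp_rw [mul_sub, mul_one]
  rw [integral_sub (integrable_exp_neg_mul_sq hs).integrableOn (hcos_int |h|),
    integral_sq_heatKernel_add_sub hs, ← heatKernel_abs _ h, hspectral_zero, hspectral]
  ring

lemma integral_Ioc_exp_neg_mul {c : ℝ} (hc : c ≠ 0) {t : ℝ} (ht : 0 ≤ t) :
    ∫ s in Ioc 0 t, exp (-s * c) = (1 - exp (-t * c)) / c := by
  rw [← intervalIntegral.integral_of_le ht]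
  simp_rw [neg_mul, ← mul_neg]
  rw [intervalIntegral.integral_comp_mul_right exp (neg_ne_zero.mpr hc), integral_exp,
    smul_eq_mul, zero_mul, exp_zero]
  field_simp
  ring

lemma integrableOn_Ioc_sqrt_div (c t : ℝ) : IntegrableOn (fun s => √(c / s)) (Ioc 0 t) := by
  rcases le_or_gt t 0 with ht | ht
  · simp [Ioc_eq_empty_of_le ht]
  have hrpow : IntegrableOn (fun s : ℝ => s ^ (-(1 / 2) : ℝ)) (Ioc 0 t) :=
    (intervalIntegrable_iff_integrableOn_Ioc_of_le ht.le).1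
      (intervalIntegral.intervalIntegrable_rpow' (by norm_num))
  refine IntegrableOn.congr_fun (hrpow.const_mul √c) (fun s hs => ?_) measurableSet_Ioc
  rw [sqrt_div' c hs.1.le, sqrt_eq_rpow s, rpow_neg hs.1.le, ← div_eq_mul_inv]

lemma integrable_uncurry_exp_neg_mul_sq_mul {g : ℝ → ℝ} (hg : Continuous g) {C : ℝ}
    (hC : ∀ ξ, |g ξ| ≤ C) (t : ℝ) :
    Integrable (Function.uncurry fun s ξ => exp (-s * ξ ^ 2) * g ξ)
      ((volume.restrict (Ioc 0 t)).prod volume) := by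
  have hmeas : AEStronglyMeasurable (Function.uncurry fun s ξ => exp (-s * ξ ^ 2) * g ξ)
      ((volume.restrict (Ioc 0 t)).prod volume) :=
    (by fun_prop : Continuous fun p : ℝ × ℝ => exp (-p.1 * p.2 ^ 2) * g p.2).aestronglyMeasurable
  have hslice {s : ℝ} (hs : 0 < s) : Integrable fun ξ => exp (-s * ξ ^ 2) * g ξ :=
    (integrable_exp_neg_mul_sq hs).mul_bdd hg.aestronglyMeasurable (ae_of_all _ hC)
  have hslice_bound {s : ℝ} (hs : 0 < s) :
      ∫ ξ, ‖exp (-s * ξ ^ 2) * g ξ‖ ≤ C * √(π / s) := by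
    rw [← integral_gaussian, ← integral_const_mul]
    refine integral_mono (hslice hs).norm ((integrable_exp_neg_mul_sq hs).const_mul C) fun ξ => ?_
    rw [norm_mul, norm_of_nonneg (exp_pos _).le, mul_comm C]
    exact mul_le_mul_of_nonneg_left (hC ξ) (exp_pos _).le
  rw [integrable_prod_iff hmeas]
  refine ⟨(ae_restrict_mem measurableSet_Ioc).mono fun s hs => hslice hs.1, ?_⟩
  refine ((integrableOn_Ioc_sqrt_div π t).const_mul C).mono' hmeas.norm.integral_prod_right' ?_
  refine (ae_restrict_mem measurableSet_Ioc).mono fun s hs => ?_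
  rw [norm_of_nonneg (integral_nonneg fun _ => norm_nonneg _)]
  exact hslice_bound hs.1

theorem heat_increment_plancherel (t : ℝ) (ht : 0 < t) (h : ℝ) :
    ∫ s in Set.Ioc (0 : ℝ) t, ∫ v : ℝ, (heatKernel s (v + h) - heatKernel s v) ^ 2
      = (2 / Real.pi) *
        ∫ ξ in Set.Ioi (0 : ℝ),
          (1 - Real.exp (-t * ξ ^ 2)) * (1 - Real.cos (|h| * ξ)) / ξ ^ 2 := by
  have hbound (ξ : ℝ) : |1 - cos (|h| * ξ)| ≤ 2 :=
    abs_le.2 ⟨by linarith [cos_le_one (|h| * ξ)], by linarith [neg_one_le_cos (|h| * ξ)]⟩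
  have hfubini : Integrable (Function.uncurry fun s ξ => exp (-s * ξ ^ 2) * (1 - cos (|h| * ξ)))
      ((volume.restrict (Ioc 0 t)).prod (volume.restrict (Ioi 0))) :=
    (integrable_uncurry_exp_neg_mul_sq_mul (by fun_prop) hbound t).mono_measure
      (Measure.prod_mono le_rfl Measure.restrict_le_self)
  rw [setIntegral_congr_fun measurableSet_Ioc fun s hs =>
      integral_sq_heatKernel_add_sub_eq_integral_Ioi hs.1 h,
    integral_const_mul, integral_integral_swap hfubini]
  congr 1
  refine setIntegral_congr_fun measurableSet_Ioi fun ξ hξ => ?_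
  rw [integral_mul_const, integral_Ioc_exp_neg_mul (pow_ne_zero 2 hξ.ne') ht.le,
    div_mul_eq_mul_div]
end

section
/- Fix t > 0 and A > 0. There exists a constant c > 0 (depending on t and A) such that for every K with 0 < K ≤ A, ∫₀ᵗ ∫_ℝ (p_u(Z − K) − p_u(Z))² dZ du ≥ c·K, where p_u is the standard heat kernel. One may take c = (2/π)(1 − e^{−t A^{−2}}) ∫₁^∞ (1 − cos z)/z² dz. -/
open MeasureTheory Real

lemma sqrt_two_pi_mul_two_mul (u : ℝ) : √(2 * π * (2 * u)) = 2 * √(π * u) := by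
  rw [show 2 * π * (2 * u) = 2 ^ 2 * (π * u) by ring, sqrt_mul (by positivity),
    sqrt_sq two_pos.le]

section

variable {u : ℝ}

lemma heatKernel_mul_heatKernel_s4 (hu : 0 < u) (a b Z : ℝ) :
    heatKernel u (Z - a) * heatKernel u (Z - b) =
      heatKernel (2 * u) (a - b) *
        ((√(π * u))⁻¹ * exp (-u⁻¹ * (Z - (a + b) / 2) ^ 2)) := by
  have hexp : exp (-(Z - a) ^ 2 / (2 * u)) * exp (-(Z - b) ^ 2 / (2 * u)) =
      exp (-(a - b) ^ 2 / (2 * (2 * u))) * exp (-u⁻¹ * (Z - (a + b) / 2) ^ 2) := by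
    rw [← exp_add, ← exp_add]; congr 1; field_simp; ring
  unfold heatKernel
  rw [mul_mul_mul_comm, hexp, sqrt_two_pi_mul_two_mul]
  field_simp
  linear_combination
    2 * sq_sqrt (by positivity : 0 ≤ π * u) - sq_sqrt (by positivity : 0 ≤ 2 * π * u)

lemma integrable_heatKernel_mul_heatKernel (hu : 0 < u) (a b : ℝ) :
    Integrable fun Z ↦ heatKernel u (Z - a) * heatKernel u (Z - b) := by
  simp_rw [heatKernel_mul_heatKernel_s4 hu]
  exact (((integrable_exp_neg_mul_sq (inv_pos.2 hu)).comp_sub_right _).const_mul _).const_mul _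

lemma integral_heatKernel_mul_heatKernel (hu : 0 < u) (a b : ℝ) :
    ∫ Z, heatKernel u (Z - a) * heatKernel u (Z - b) = heatKernel (2 * u) (a - b) := by
  simp_rw [heatKernel_mul_heatKernel_s4 hu, integral_const_mul,
    integral_sub_right_eq_self (fun Z ↦ exp (-u⁻¹ * Z ^ 2)), integral_gaussian, div_inv_eq_mul]
  rw [inv_mul_cancel₀ (by positivity), mul_one]

lemma integral_heatKernel_sub_sq (hu : 0 < u) (K : ℝ) :
    ∫ Z, (heatKernel u (Z - K) - heatKernel u Z) ^ 2 =
      (1 - exp (-K ^ 2 / (4 * u))) / √(π * u) := by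
  have hI := integrable_heatKernel_mul_heatKernel hu
  have hII := integral_heatKernel_mul_heatKernel hu
  have hsq : ∀ Z, (heatKernel u (Z - K) - heatKernel u Z) ^ 2 =
      heatKernel u (Z - K) * heatKernel u (Z - K)
        - 2 * (heatKernel u (Z - K) * heatKernel u (Z - 0))
        + heatKernel u (Z - 0) * heatKernel u (Z - 0) := fun Z ↦ by rw [sub_zero]; ring
  simp_rw [hsq]
  rw [integral_add ?_ (hI _ _), integral_sub (hI _ _) ((hI _ _).const_mul _), integral_const_mul,
    hII, hII, hII]
  swap
  · exact (hI _ _).sub ((hI _ _).const_mul _)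
  simp only [heatKernel, sqrt_two_pi_mul_two_mul, sub_self, sub_zero]
  norm_num
  field_simp
  norm_num
  ring

end

lemma integrableOn_inv_sqrt_pi_mul (t : ℝ) :
    IntegrableOn (fun u ↦ (√(π * u))⁻¹) (Set.Ioc 0 t) := by
  have hrpow : IntegrableOn (fun u : ℝ ↦ (√π)⁻¹ * u ^ (-(1 / 2) : ℝ)) (Set.Ioc 0 t) :=
    ((intervalIntegral.intervalIntegrable_rpow' (by norm_num)).def'.mono_set
      Set.Ioc_subset_uIoc).const_mul _
  refine hrpow.congr_fun (fun u hu ↦ ?_) measurableSet_Ioc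
  dsimp only
  rw [sqrt_mul pi_pos.le, mul_inv, rpow_neg hu.1.le, ← sqrt_eq_rpow]

lemma integrableOn_integral_heatKernel_sub_sq (K t : ℝ) :
    IntegrableOn (fun u ↦ ∫ Z, (heatKernel u (Z - K) - heatKernel u Z) ^ 2) (Set.Ioc 0 t) := by
  refine IntegrableOn.congr_fun ?_ (fun u hu ↦ (integral_heatKernel_sub_sq hu.1 K).symm)
    measurableSet_Ioc
  refine (integrableOn_inv_sqrt_pi_mul t).mono'
    (Measurable.aestronglyMeasurable (by fun_prop)) ?_
  filter_upwards [ae_restrict_mem measurableSet_Ioc] with u hu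
  have hexp_le : exp (-K ^ 2 / (4 * u)) ≤ 1 :=
    exp_le_one_iff.2 (div_nonpos_of_nonpos_of_nonneg (by nlinarith [sq_nonneg K])
      (by linarith [hu.1]))
  rw [norm_div, norm_of_nonneg (by linarith), norm_of_nonneg (sqrt_nonneg _), div_eq_mul_inv]
  exact mul_le_of_le_one_left (by positivity) (by linarith [exp_pos (-K ^ 2 / (4 * u))])

lemma le_integral_heatKernel_sub_sq {u s K : ℝ} (hu : 0 < u) (hus : u ≤ s)
    (hsK : 4 * s ≤ K ^ 2) :
    (1 - exp (-1)) / √(π * s) ≤ ∫ Z, (heatKernel u (Z - K) - heatKernel u Z) ^ 2 := by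
  rw [integral_heatKernel_sub_sq hu]
  have hexp : exp (-K ^ 2 / (4 * u)) ≤ exp (-1) :=
    exp_le_exp.2 (by rw [div_le_iff₀ (by positivity)]; linarith)
  have : exp (-1) < 1 := exp_lt_one_iff.2 (by norm_num)
  gcongr
  linarith

theorem heat_increment_lower_bound (t A : ℝ) (ht : 0 < t) (hA : 0 < A) :
    ∃ c : ℝ, 0 < c ∧ ∀ K : ℝ, 0 < K → K ≤ A →
      c * K ≤ ∫ u in Set.Ioc (0 : ℝ) t, ∫ Z : ℝ,
        (heatKernel u (Z - K) - heatKernel u Z) ^ 2 := by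
  set m := min (√t / A) (1 / 2)
  have hm : 0 < m := lt_min (by positivity) (by norm_num)
  have hc : 0 < 1 - exp (-1) := sub_pos.2 (exp_lt_one_iff.2 (by norm_num))
  refine ⟨(1 - exp (-1)) / √π * m, by positivity, fun K hK hKA ↦ ?_⟩
  have hmK_t : m * K ≤ √t := calc
    m * K ≤ √t / A * A := mul_le_mul (min_le_left _ _) hKA hK.le (by positivity)
    _ = √t := div_mul_cancel₀ _ hA.ne'
  have hmK_K : m * K ≤ K / 2 := by nlinarith [min_le_right (√t / A) (1 / 2)]
  have hst : (m * K) ^ 2 ≤ t := by nlinarith [sq_sqrt ht.le, mul_pos hm hK]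
  have hsK : 4 * (m * K) ^ 2 ≤ K ^ 2 := by nlinarith [mul_pos hm hK]
  calc (1 - exp (-1)) / √π * m * K
      = (1 - exp (-1)) / √(π * (m * K) ^ 2) * volume.real (Set.Ioc 0 ((m * K) ^ 2)) := by
        rw [Real.volume_real_Ioc_of_le (by positivity), sqrt_mul pi_pos.le,
          sqrt_sq (by positivity)]
        field_simp
        ring
    _ ≤ ∫ u in Set.Ioc 0 ((m * K) ^ 2), ∫ Z, (heatKernel u (Z - K) - heatKernel u Z) ^ 2 :=
        setIntegral_ge_of_const_le_real measurableSet_Ioc measure_Ioc_lt_top.ne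
          (fun u hu ↦ le_integral_heatKernel_sub_sq hu.1 hu.2 hsK)
          (integrableOn_integral_heatKernel_sub_sq K _)
    _ ≤ ∫ u in Set.Ioc 0 t, ∫ Z, (heatKernel u (Z - K) - heatKernel u Z) ^ 2 :=
        setIntegral_mono_set (integrableOn_integral_heatKernel_sub_sq K t)
          (Filter.Eventually.of_forall fun u ↦ integral_nonneg fun Z ↦ sq_nonneg _)
          (Set.Ioc_subset_Ioc_right hst).eventuallyLE
end

section
/- Let a₁, a₂ > 0 and f(z) = z/√a₁ for z ≤ 0, f(z) = z/√a₂ for z > 0. Define E⁺(u,x,z) = exp(−(|f(z)|+|f(x)|)²/(2u)) for u > 0. Then there exists a constant C > 0 such that for all t > 0 and x, y ∈ ℝ, ∫₀ᵗ (2πu)^{-1} ∫_ℝ |E⁺(u,y,z) − E⁺(u,x,z)|² dz du ≤ C·|y − x|. -/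
/-!
On each half-line `|f|` is linear, `-z / √a₁` resp. `z / √a₂`, so the substitution `w = |f z|`
turns the inner integral into `√a₁ + √a₂` times an integral over `w > 0` of the squared
difference of two Gaussians of variance `u` whose centres differ by `h = |f y| - |f x|`; over all
of `ℝ` that squared difference integrates to `2 √(π u) (1 - exp (-h² / (4u)))`. After the factor
`1 / (2πu)` the time integrand is a multiple of `(1 - exp (-h² / (4u))) / √u`, which is at most
`u^(-1/2)` and at most `(h² / 4) u^(-3/2)`; splitting `(0, ∞)` at `u = h² / 4` gives a total of
at most `2 |h|`. Finally `|f|` is Lipschitz with constant `1 / min √a₁ √a₂`.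
-/

open MeasureTheory Real Set

lemma integrable_exp_neg_add_sq_div {s : ℝ} (hs : 0 < s) (a : ℝ) :
    Integrable fun v : ℝ => exp (-(v + a) ^ 2 / s) := by
  refine ((integrable_exp_neg_mul_sq (inv_pos.2 hs)).comp_add_right a).congr
    (ae_of_all _ fun v => ?_)
  simp only
  ring_nf

lemma integral_exp_neg_add_sq_div (s a : ℝ) :
    ∫ v : ℝ, exp (-(v + a) ^ 2 / s) = √(π * s) := by
  have h (v : ℝ) : exp (-(v + a) ^ 2 / s) = exp (-s⁻¹ * (v + a) ^ 2) := by ring_nf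
  simp_rw [h]
  rw [integral_add_right_eq_self (fun v => exp (-s⁻¹ * v ^ 2)) a, integral_gaussian,
    div_inv_eq_mul]

section HeatKernelIncrement

variable {u : ℝ}

-- The cross term is rewritten as a Gaussian centred at the midpoint `-(a + b) / 2`.
lemma sq_exp_sub_exp_eq (hu : 0 < u) (a b v : ℝ) :
    (exp (-(v + a) ^ 2 / (2 * u)) - exp (-(v + b) ^ 2 / (2 * u))) ^ 2 =
      exp (-(v + a) ^ 2 / u) + exp (-(v + b) ^ 2 / u) -
        2 * exp (-(a - b) ^ 2 / (4 * u)) * exp (-(v + (a + b) / 2) ^ 2 / u) := by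
  have hsq (c : ℝ) : exp (-(v + c) ^ 2 / (2 * u)) ^ 2 = exp (-(v + c) ^ 2 / u) := by
    rw [← exp_nat_mul]
    congr 1
    field_simp
    ring
  have hprod : exp (-(v + a) ^ 2 / (2 * u)) * exp (-(v + b) ^ 2 / (2 * u)) =
      exp (-(a - b) ^ 2 / (4 * u)) * exp (-(v + (a + b) / 2) ^ 2 / u) := by
    rw [← exp_add, ← exp_add]
    congr 1
    field_simp
    ring
  rw [sub_sq, hsq, hsq, mul_assoc 2, hprod]
  ring

lemma integrable_sq_exp_sub_exp (hu : 0 < u) (a b : ℝ) :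
    Integrable fun v : ℝ =>
      (exp (-(v + a) ^ 2 / (2 * u)) - exp (-(v + b) ^ 2 / (2 * u))) ^ 2 := by
  simp_rw [sq_exp_sub_exp_eq hu a b]
  exact ((integrable_exp_neg_add_sq_div hu a).add (integrable_exp_neg_add_sq_div hu b)).sub
    ((integrable_exp_neg_add_sq_div hu _).const_mul _)

lemma integral_sq_exp_sub_exp (hu : 0 < u) (a b : ℝ) :
    ∫ v : ℝ, (exp (-(v + a) ^ 2 / (2 * u)) - exp (-(v + b) ^ 2 / (2 * u))) ^ 2 =
      2 * √(π * u) * (1 - exp (-(a - b) ^ 2 / (4 * u))) := by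
  have ha := integrable_exp_neg_add_sq_div hu a
  have hb := integrable_exp_neg_add_sq_div hu b
  have hab : Integrable fun v : ℝ => exp (-(v + a) ^ 2 / u) + exp (-(v + b) ^ 2 / u) :=
    ha.add hb
  simp_rw [sq_exp_sub_exp_eq hu a b]
  rw [integral_sub hab ((integrable_exp_neg_add_sq_div hu _).const_mul _), integral_add ha hb,
    integral_const_mul, integral_exp_neg_add_sq_div u, integral_exp_neg_add_sq_div u,
    integral_exp_neg_add_sq_div u]
  ring

end HeatKernelIncrement

lemma integral_comp_ite_neg_div {E : Type*} [NormedAddCommGroup E] [NormedSpace ℝ E]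
    {α β : ℝ} (hα : 0 < α) (hβ : 0 < β) {G : ℝ → E} (hG : Integrable G) :
    ∫ z, G (if z ≤ 0 then -z / α else z / β) = (α + β) • ∫ w in Ioi 0, G w := by
  have hIic : EqOn (fun z => G (if z ≤ 0 then -z / α else z / β)) (fun z => G (-z * α⁻¹))
      (Iic 0) := fun z hz => by simp only [if_pos (mem_Iic.1 hz), div_eq_mul_inv]
  have hIoi : EqOn (fun z => G (if z ≤ 0 then -z / α else z / β)) (fun z => G (z * β⁻¹))
      (Ioi 0) := fun z hz => by simp only [if_neg (not_le.2 (mem_Ioi.1 hz)), div_eq_mul_inv]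
  rw [← intervalIntegral.integral_Iic_add_Ioi
      ((hG.comp_mul_right' (inv_ne_zero hα.ne')).comp_neg.integrableOn.congr_fun hIic.symm
        measurableSet_Iic)
      ((hG.comp_mul_right' (inv_ne_zero hβ.ne')).integrableOn.congr_fun hIoi.symm
        measurableSet_Ioi),
    setIntegral_congr_fun measurableSet_Iic hIic, setIntegral_congr_fun measurableSet_Ioi hIoi,
    integral_comp_neg_Iic 0 (fun w => G (w * α⁻¹)), neg_zero,
    integral_comp_mul_right_Ioi G 0 (inv_pos.2 hα),
    integral_comp_mul_right_Ioi G 0 (inv_pos.2 hβ), zero_mul, zero_mul, inv_inv, inv_inv,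
    add_smul]

lemma abs_ite_div_sub_le {α β : ℝ} (hα : 0 < α) (hβ : 0 < β) (x y : ℝ) :
    |(if y ≤ 0 then y / α else y / β) - (if x ≤ 0 then x / α else x / β)| ≤
      |y - x| / min α β := by
  wlog hxy : x ≤ y generalizing x y
  · rw [abs_sub_comm, abs_sub_comm y]
    exact this y x (le_of_not_ge hxy)
  have hm := lt_min hα hβ
  have h₁ : α⁻¹ ≤ (min α β)⁻¹ := inv_anti₀ hm (min_le_left _ _)
  have h₂ : β⁻¹ ≤ (min α β)⁻¹ := inv_anti₀ hm (min_le_right _ _)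
  have hα' : 0 < α⁻¹ := inv_pos.2 hα
  have hβ' : 0 < β⁻¹ := inv_pos.2 hβ
  rw [abs_of_nonneg (sub_nonneg.2 hxy), abs_le]
  simp only [div_eq_mul_inv]
  split_ifs <;> constructor <;> nlinarith

lemma inv_two_pi_mul_integral_sq_exp_sub_exp_comp_le {α β u : ℝ} (hα : 0 < α) (hβ : 0 < β)
    (hu : 0 < u) {g : ℝ → ℝ} (hg : ∀ z, g z = if z ≤ 0 then -z / α else z / β) (a b : ℝ) :
    1 / (2 * π * u) *
        ∫ z, (exp (-(g z + a) ^ 2 / (2 * u)) - exp (-(g z + b) ^ 2 / (2 * u))) ^ 2 ≤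
      (α + β) / √π * ((1 - exp (-(a - b) ^ 2 / (4 * u))) * u ^ (-(1 / 2) : ℝ)) := by
  have hG := integrable_sq_exp_sub_exp hu a b
  have hz : ∫ z, (exp (-(g z + a) ^ 2 / (2 * u)) - exp (-(g z + b) ^ 2 / (2 * u))) ^ 2 ≤
      (α + β) * (2 * √(π * u) * (1 - exp (-(a - b) ^ 2 / (4 * u)))) := by
    simp_rw [hg]
    rw [integral_comp_ite_neg_div hα hβ hG, smul_eq_mul, ← integral_sq_exp_sub_exp hu a b]
    exact mul_le_mul_of_nonneg_left
      (setIntegral_le_integral hG (ae_of_all _ fun _ => sq_nonneg _)) (by positivity)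
  calc _ ≤ 1 / (2 * π * u) *
        ((α + β) * (2 * √(π * u) * (1 - exp (-(a - b) ^ 2 / (4 * u))))) := by
        gcongr
    _ = _ := by
        have hπ := sq_sqrt pi_pos.le
        have hu' := sq_sqrt hu.le
        rw [rpow_neg hu.le, ← sqrt_eq_rpow, sqrt_mul pi_pos.le]
        field_simp
        rw [hπ, hu']

section TimeIntegral

variable (h : ℝ)

lemma one_sub_exp_mul_rpow_nonneg {u : ℝ} (hu : 0 < u) :
    0 ≤ (1 - exp (-h ^ 2 / (4 * u))) * u ^ (-(1 / 2) : ℝ) := by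
  have : exp (-h ^ 2 / (4 * u)) ≤ 1 := exp_le_one_iff.2 <|
    div_nonpos_of_nonpos_of_nonneg (neg_nonpos.2 (sq_nonneg h)) (by positivity)
  have := rpow_nonneg hu.le (-(1 / 2) : ℝ)
  bound

lemma one_sub_exp_mul_rpow_le_rpow {u : ℝ} (hu : 0 < u) :
    (1 - exp (-h ^ 2 / (4 * u))) * u ^ (-(1 / 2) : ℝ) ≤ u ^ (-(1 / 2) : ℝ) := by
  have := exp_pos (-h ^ 2 / (4 * u))
  have := rpow_nonneg hu.le (-(1 / 2) : ℝ)
  nlinarith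

lemma one_sub_exp_mul_rpow_le_mul_rpow {u : ℝ} (hu : 0 < u) :
    (1 - exp (-h ^ 2 / (4 * u))) * u ^ (-(1 / 2) : ℝ) ≤ h ^ 2 / 4 * u ^ (-(3 / 2) : ℝ) := by
  have h₁ : 1 - exp (-h ^ 2 / (4 * u)) ≤ h ^ 2 / (4 * u) := by
    have := one_sub_le_exp_neg (h ^ 2 / (4 * u))
    rw [neg_div]
    linarith
  have h₂ : u ^ (-(3 / 2) : ℝ) = u⁻¹ * u ^ (-(1 / 2) : ℝ) := by
    rw [← rpow_neg_one, ← rpow_add hu]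
    norm_num
  calc _ ≤ h ^ 2 / (4 * u) * u ^ (-(1 / 2) : ℝ) := by gcongr
    _ = _ := by rw [h₂]; field_simp

lemma integrableOn_one_sub_exp_mul_rpow :
    IntegrableOn (fun u => (1 - exp (-h ^ 2 / (4 * u))) * u ^ (-(1 / 2) : ℝ)) (Ioi 0) := by
  rcases eq_or_ne h 0 with rfl | hh
  · simp
  have hb : 0 < h ^ 2 / 4 := by positivity
  have hmeas : AEStronglyMeasurable
      (fun u => (1 - exp (-h ^ 2 / (4 * u))) * u ^ (-(1 / 2) : ℝ)) := by fun_prop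
  rw [← Ioc_union_Ioi_eq_Ioi hb.le]
  refine IntegrableOn.union ?_ ?_
  · refine Integrable.mono' ((intervalIntegrable_iff_integrableOn_Ioc_of_le hb.le).1
      (intervalIntegral.intervalIntegrable_rpow' (r := -(1 / 2)) (by norm_num))) hmeas.restrict
      (ae_restrict_of_forall_mem measurableSet_Ioc fun u hu => ?_)
    rw [norm_of_nonneg (one_sub_exp_mul_rpow_nonneg h hu.1)]
    exact one_sub_exp_mul_rpow_le_rpow h hu.1
  · refine Integrable.mono'
      ((integrableOn_Ioi_rpow_of_lt (a := -(3 / 2)) (by norm_num) hb).const_mul (h ^ 2 / 4))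
      hmeas.restrict (ae_restrict_of_forall_mem measurableSet_Ioi fun u hu => ?_)
    have hu : 0 < u := hb.trans hu
    rw [norm_of_nonneg (one_sub_exp_mul_rpow_nonneg h hu)]
    exact one_sub_exp_mul_rpow_le_mul_rpow h hu

lemma setIntegral_one_sub_exp_mul_rpow_le :
    ∫ u in Ioi 0, (1 - exp (-h ^ 2 / (4 * u))) * u ^ (-(1 / 2) : ℝ) ≤ 2 * |h| := by
  rcases eq_or_ne h 0 with rfl | hh
  · simp
  set r := |h| / 2 with hr_def
  have hr : 0 < r := by positivity
  have hb : h ^ 2 / 4 = r ^ 2 := by rw [div_pow, sq_abs]; ring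
  have hb_half : (r ^ 2) ^ (1 / 2 : ℝ) = r := by rw [← sqrt_eq_rpow, sqrt_sq hr.le]
  have hb_neg_half : (r ^ 2) ^ (-(1 / 2) : ℝ) = r⁻¹ := by rw [rpow_neg (sq_nonneg r), hb_half]
  have hφ := integrableOn_one_sub_exp_mul_rpow h
  rw [← intervalIntegral.integral_interval_add_Ioi hφ
      (hφ.mono_set (Ioi_subset_Ioi (sq_nonneg r))),
    intervalIntegral.integral_of_le (sq_nonneg r)]
  calc _ ≤ (∫ u in Ioc 0 (r ^ 2), u ^ (-(1 / 2) : ℝ)) +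
        ∫ u in Ioi (r ^ 2), r ^ 2 * u ^ (-(3 / 2) : ℝ) := by
        refine add_le_add (setIntegral_mono_on (hφ.mono_set Ioc_subset_Ioi_self)
          ((intervalIntegrable_iff_integrableOn_Ioc_of_le (sq_nonneg r)).1
            (intervalIntegral.intervalIntegrable_rpow' (by norm_num)))
          measurableSet_Ioc fun u hu => one_sub_exp_mul_rpow_le_rpow h hu.1)
          (setIntegral_mono_on (hφ.mono_set (Ioi_subset_Ioi (sq_nonneg r)))
          ((integrableOn_Ioi_rpow_of_lt (by norm_num) (by positivity)).const_mul _)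
          measurableSet_Ioi fun u hu => ?_)
        rw [← hb]
        exact one_sub_exp_mul_rpow_le_mul_rpow h ((sq_nonneg r).trans_lt hu)
    _ = 2 * |h| := by
        rw [← intervalIntegral.integral_of_le (sq_nonneg r), integral_rpow (Or.inl (by norm_num)),
          integral_const_mul, integral_Ioi_rpow_of_lt (by norm_num) (by positivity)]
        norm_num
        rw [hb_half, hb_neg_half, hr_def]
        field_simp
        ring

end TimeIntegral

theorem Eplus_increment_upper_bound (a₁ a₂ : ℝ) (ha₁ : 0 < a₁) (ha₂ : 0 < a₂)
    (f : ℝ → ℝ)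
    (hf : ∀ z : ℝ, f z = if z ≤ 0 then z / Real.sqrt a₁ else z / Real.sqrt a₂)
    (E : ℝ → ℝ → ℝ → ℝ)
    (hE : ∀ u x z : ℝ, E u x z = Real.exp (-(|f z| + |f x|) ^ 2 / (2 * u))) :
    ∃ C : ℝ, 0 < C ∧ ∀ t : ℝ, 0 < t → ∀ x y : ℝ,
      (∫ u in Set.Ioc (0 : ℝ) t, (1 / (2 * Real.pi * u)) *
          ∫ z : ℝ, |E u y z - E u x z| ^ 2)
        ≤ C * |y - x| := by
  have hα : 0 < √a₁ := sqrt_pos.2 ha₁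
  have hβ : 0 < √a₂ := sqrt_pos.2 ha₂
  have habs_f (z : ℝ) : |f z| = if z ≤ 0 then -z / √a₁ else z / √a₂ := by
    rw [hf]
    split_ifs with hz
    · rw [abs_div, abs_of_nonpos hz, abs_of_pos hα]
    · rw [abs_div, abs_of_pos (not_le.1 hz), abs_of_pos hβ]
  set K := (√a₁ + √a₂) / √π
  refine ⟨2 * K / min √a₁ √a₂, by positivity, fun t _ x y => ?_⟩
  set h := |f y| - |f x|
  have hlip : |h| ≤ |y - x| / min √a₁ √a₂ := (abs_abs_sub_abs_le_abs_sub _ _).trans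
    (by simpa only [hf] using abs_ite_div_sub_le hα hβ x y)
  have hφ := integrableOn_one_sub_exp_mul_rpow h
  calc _ ≤ ∫ u in Ioc 0 t, K * ((1 - exp (-h ^ 2 / (4 * u))) * u ^ (-(1 / 2) : ℝ)) := by
        refine integral_mono_of_nonneg
          (ae_restrict_of_forall_mem measurableSet_Ioc fun u hu => ?_)
          ((hφ.mono_set Ioc_subset_Ioi_self).const_mul K)
          (ae_restrict_of_forall_mem measurableSet_Ioc fun u hu => ?_)
        · have := hu.1
          positivity
        · simp only [hE, sq_abs]
          exact inv_two_pi_mul_integral_sq_exp_sub_exp_comp_le hα hβ hu.1 habs_f _ _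
    _ ≤ K * ∫ u in Ioi 0, (1 - exp (-h ^ 2 / (4 * u))) * u ^ (-(1 / 2) : ℝ) := by
        rw [integral_const_mul]
        refine mul_le_mul_of_nonneg_left
          (setIntegral_mono_set hφ ?_ Ioc_subset_Ioi_self.eventuallyLE) (by positivity)
        exact ae_restrict_of_forall_mem measurableSet_Ioi fun u hu =>
          one_sub_exp_mul_rpow_nonneg h hu
    _ ≤ K * (2 * (|y - x| / min √a₁ √a₂)) := by
        gcongr
        exact (setIntegral_one_sub_exp_mul_rpow_le h).trans (by gcongr)
    _ = 2 * K / min √a₁ √a₂ * |y - x| := by ring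
end

section
/- Let a₁, a₂ > 0 and f as above, and define E⁻(u,x,z) = exp(−(f(z)−f(x))²/(2u)) for u > 0. Fix A > 0 and t > 0. Then there exists c > 0 such that for all x, y ∈ [0, A], ∫₀ᵗ (2πu)^{-1} ∫_ℝ |E⁻(u,y,z) − E⁻(u,x,z)|² dz du ≥ c·|y − x|. -/
open MeasureTheory Real Set

/-!
For `x < y` in `[0, A]` put `K = ((y - x) / √a₂)²`. On `[0, ∞)` the map `f` is linear, so for
times `u ≍ min t K` and points `z` in the last quarter `[y - (y - x) / 4, y]` of the segment,
`E u y z ≥ exp (-r)` while `E u x z ≤ exp (-9 r)`, where `r = K / (32 u)` stays between two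
constants independent of `x, y`. Integrating this gap over such `z` and `u` yields a multiple of
`y - x`. The `u`-integrand is integrable (so its Bochner integral is not the junk value `0`)
because `f` expands distances by at least `min a₁^(-1/2) a₂^(-1/2)`, which makes the
`z`-integral `O(√u)`.
-/

theorem mul_measureReal_le_setIntegral {α : Type*} [MeasurableSpace α] {μ : Measure α}
    {f : α → ℝ} {s t : Set α} {c : ℝ} (hst : s ⊆ t) (hs : MeasurableSet s) (hμs : μ s ≠ ⊤)
    (hf : IntegrableOn f t μ) (hf₀ : 0 ≤ᵐ[μ.restrict t] f) (hc : ∀ x ∈ s, c ≤ f x) :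
    c * μ.real s ≤ ∫ x in t, f x ∂μ :=
  (setIntegral_ge_of_const_le_real hs hμs hc (hf.mono_set hst)).trans
    (setIntegral_mono_set hf hf₀ hst.eventuallyLE)

theorem integral_exp_neg_mul_sub_sq (b m : ℝ) :
    ∫ z : ℝ, exp (-b * (z - m) ^ 2) = √(π / b) := by
  rw [integral_sub_right_eq_self (fun z => exp (-b * z ^ 2)) m, integral_gaussian]

theorem exp_neg_mul_one_sub_le_exp_neg_sub_exp_neg_nine_mul {r M : ℝ} (hr : 1 / 32 ≤ r)
    (hrM : r ≤ M) : exp (-M) * (1 - exp (-(1 / 4))) ≤ exp (-r) - exp (-(9 * r)) := by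
  have hfactor : exp (-r) - exp (-(9 * r)) = exp (-r) * (1 - exp (-(8 * r))) := by
    rw [mul_sub, mul_one, ← exp_add]; ring_nf
  rw [hfactor]
  gcongr
  · exact sub_nonneg.2 (exp_le_one_iff.2 (by norm_num))
  · linarith

noncomputable def piecewiseLinear (s₁ s₂ z : ℝ) : ℝ := if z ≤ 0 then z / s₁ else z / s₂

theorem measurable_piecewiseLinear (s₁ s₂ : ℝ) : Measurable (piecewiseLinear s₁ s₂) :=
  Measurable.ite measurableSet_Iic (measurable_id.div_const _) (measurable_id.div_const _)

theorem piecewiseLinear_of_nonneg (s₁ s₂ : ℝ) {z : ℝ} (hz : 0 ≤ z) :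
    piecewiseLinear s₁ s₂ z = z / s₂ := by
  rcases hz.eq_or_lt with rfl | hz
  · simp [piecewiseLinear]
  · simp [piecewiseLinear, hz.not_ge]

theorem min_inv_mul_abs_sub_le_abs_piecewiseLinear_sub (s₁ s₂ z w : ℝ) :
    min s₁⁻¹ s₂⁻¹ * |z - w| ≤ |piecewiseLinear s₁ s₂ z - piecewiseLinear s₁ s₂ w| := by
  wlog hwz : w ≤ z generalizing z w
  · rw [abs_sub_comm, abs_sub_comm (piecewiseLinear _ _ z)]
    exact this w z (le_of_not_ge hwz)
  have hm₁ : min s₁⁻¹ s₂⁻¹ ≤ s₁⁻¹ := min_le_left _ _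
  have hm₂ : min s₁⁻¹ s₂⁻¹ ≤ s₂⁻¹ := min_le_right _ _
  rw [abs_of_nonneg (sub_nonneg.2 hwz)]
  refine le_trans ?_ (le_abs_self _)
  unfold piecewiseLinear
  split_ifs with hz hw hw <;> simp only [div_eq_mul_inv] <;> nlinarith

noncomputable def Eminus (g : ℝ → ℝ) (u x z : ℝ) : ℝ := exp (-(g z - g x) ^ 2 / (2 * u))

section Eminus

variable {g : ℝ → ℝ} {m u x y z : ℝ}

theorem Eminus_sq (hu : 0 < u) : Eminus g u x z ^ 2 = exp (-(g z - g x) ^ 2 / u) := by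
  rw [Eminus, ← exp_nat_mul]
  congr 1
  field_simp
  ring

theorem Eminus_sq_le (hexp : ∀ z w, m * |z - w| ≤ |g z - g w|) (hm : 0 ≤ m) (hu : 0 < u) :
    Eminus g u x z ^ 2 ≤ exp (-(m ^ 2 / u) * (z - x) ^ 2) := by
  rw [Eminus_sq hu, exp_le_exp, neg_mul, neg_div, neg_le_neg_iff, div_mul_eq_mul_div,
    div_le_div_iff_of_pos_right hu, ← sq_abs (g z - g x), ← sq_abs (z - x), ← mul_pow]
  exact pow_le_pow_left₀ (by positivity) (hexp z x) 2

theorem Eminus_sub_sq_le (hexp : ∀ z w, m * |z - w| ≤ |g z - g w|) (hm : 0 ≤ m) (hu : 0 < u) :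
    (Eminus g u y z - Eminus g u x z) ^ 2 ≤
      2 * exp (-(m ^ 2 / u) * (z - y) ^ 2) + 2 * exp (-(m ^ 2 / u) * (z - x) ^ 2) := by
  have hy := Eminus_sq_le (x := y) (z := z) hexp hm hu
  have hx := Eminus_sq_le (x := x) (z := z) hexp hm hu
  nlinarith [sq_nonneg (Eminus g u y z + Eminus g u x z)]

theorem integrable_Eminus_sub_sq (hg : Measurable g) (hexp : ∀ z w, m * |z - w| ≤ |g z - g w|)
    (hm : 0 < m) (hu : 0 < u) :
    Integrable (fun z => (Eminus g u y z - Eminus g u x z) ^ 2) := by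
  have hb : 0 < m ^ 2 / u := by positivity
  refine Integrable.mono'
    ((((integrable_exp_neg_mul_sq hb).comp_sub_right y).const_mul 2).add
      (((integrable_exp_neg_mul_sq hb).comp_sub_right x).const_mul 2))
    (by unfold Eminus; fun_prop) (Filter.Eventually.of_forall fun z => ?_)
  rw [Real.norm_of_nonneg (sq_nonneg _)]
  exact Eminus_sub_sq_le hexp hm.le hu

theorem integral_Eminus_sub_sq_le (hg : Measurable g) (hexp : ∀ z w, m * |z - w| ≤ |g z - g w|)
    (hm : 0 < m) (hu : 0 < u) :
    ∫ z, (Eminus g u y z - Eminus g u x z) ^ 2 ≤ 4 * √π / m * √u := by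
  have hb : 0 < m ^ 2 / u := by positivity
  have hgauss (c : ℝ) : Integrable fun z : ℝ => 2 * exp (-(m ^ 2 / u) * (z - c) ^ 2) :=
    ((integrable_exp_neg_mul_sq hb).comp_sub_right c).const_mul 2
  calc ∫ z, (Eminus g u y z - Eminus g u x z) ^ 2
      ≤ ∫ z, (2 * exp (-(m ^ 2 / u) * (z - y) ^ 2) + 2 * exp (-(m ^ 2 / u) * (z - x) ^ 2)) :=
        integral_mono (integrable_Eminus_sub_sq hg hexp hm hu) ((hgauss y).add (hgauss x))
          fun z => Eminus_sub_sq_le hexp hm.le hu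
    _ = 4 * √(π / (m ^ 2 / u)) := by
        rw [integral_add (hgauss y) (hgauss x), integral_const_mul, integral_const_mul,
          integral_exp_neg_mul_sub_sq, integral_exp_neg_mul_sub_sq]
        ring
    _ = 4 * √π / m * √u := by
        rw [div_div_eq_mul_div, sqrt_div' _ (sq_nonneg m), sqrt_mul pi_pos.le, sqrt_sq hm.le]
        ring

theorem integrableOn_Ioc_Eminus_increment (hg : Measurable g)
    (hexp : ∀ z w, m * |z - w| ≤ |g z - g w|) (hm : 0 < m) (t : ℝ) :
    IntegrableOn (fun u => 1 / (2 * π * u) * ∫ z, (Eminus g u y z - Eminus g u x z) ^ 2)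
      (Ioc 0 t) := by
  have hmeas : Measurable fun p : ℝ × ℝ => (Eminus g p.1 y p.2 - Eminus g p.1 x p.2) ^ 2 := by
    unfold Eminus; fun_prop
  have hsqrt : IntegrableOn (fun u : ℝ => 2 / (m * √π) * u ^ (-(1 / 2) : ℝ)) (Ioc 0 t) :=
    ((intervalIntegral.intervalIntegrable_rpow' (by norm_num)).1.mono_set
      Ioc_subset_uIoc).const_mul _
  refine Integrable.mono' hsqrt ((measurable_const.div (by fun_prop)).mul
    hmeas.stronglyMeasurable.integral_prod_right'.measurable).aestronglyMeasurable ?_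
  filter_upwards [ae_restrict_mem measurableSet_Ioc] with u hu
  have hu0 : 0 < u := hu.1
  rw [Real.norm_of_nonneg (mul_nonneg (by positivity) (integral_nonneg fun z => sq_nonneg _))]
  calc 1 / (2 * π * u) * ∫ z, (Eminus g u y z - Eminus g u x z) ^ 2
      ≤ 1 / (2 * π * u) * (4 * √π / m * √u) :=
        mul_le_mul_of_nonneg_left (integral_Eminus_sub_sq_le hg hexp hm hu0) (by positivity)
    _ = 2 / (m * √π) * u ^ (-(1 / 2) : ℝ) := by
        have hπ : √π ^ 2 = π := sq_sqrt pi_pos.le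
        have hu' : √u ^ 2 = u := sq_sqrt hu0.le
        rw [rpow_neg hu0.le, ← sqrt_eq_rpow]
        field_simp
        rw [hπ, hu']
        ring

theorem exp_neg_sub_exp_neg_nine_mul_le_Eminus_sub {s : ℝ} (hs : 0 < s)
    (hlin : ∀ z, 0 ≤ z → g z = z / s) (hx : 0 ≤ x) (hu : 0 < u)
    (hz : z ∈ Icc (y - (y - x) / 4) y) :
    exp (-(((y - x) / s) ^ 2 / (32 * u))) - exp (-(9 * (((y - x) / s) ^ 2 / (32 * u)))) ≤
      Eminus g u y z - Eminus g u x z := by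
  obtain ⟨hz₁, hz₂⟩ := hz
  have hxy : x ≤ y := by linarith
  have hy : g z - g y = (z - y) / s := by
    rw [hlin z (by linarith), hlin y (by linarith), sub_div]
  have hx' : g z - g x = (z - y) / s + (y - x) / s := by
    rw [hlin z (by linarith), hlin x hx]; ring
  have hK : 0 ≤ (y - x) / s := div_nonneg (by linarith) hs.le
  have hp₀ : (z - y) / s ≤ 0 := div_nonpos_of_nonpos_of_nonneg (by linarith) hs.le
  have hp₁ : -((y - x) / s) / 4 ≤ (z - y) / s := by
    rw [neg_div, div_div, mul_comm, ← div_div, ← neg_div]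
    exact div_le_div_of_nonneg_right (by linarith) hs.le
  have hnear : 16 * ((z - y) / s) ^ 2 ≤ ((y - x) / s) ^ 2 := by nlinarith
  have hfar : 9 * ((y - x) / s) ^ 2 ≤ 16 * ((z - y) / s + (y - x) / s) ^ 2 := by nlinarith
  rw [Eminus, Eminus, hy, hx']
  refine sub_le_sub (exp_le_exp.2 ?_) (exp_le_exp.2 ?_)
  · rw [neg_div, neg_le_neg_iff, div_le_div_iff₀ (by positivity) (by positivity)]
    nlinarith
  · rw [neg_div, neg_le_neg_iff, ← mul_div_assoc, div_le_div_iff₀ (by positivity) (by positivity)]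
    nlinarith

theorem mul_sub_le_integral_Eminus_sub_sq {s M : ℝ} (hg : Measurable g)
    (hexp : ∀ z w, m * |z - w| ≤ |g z - g w|) (hm : 0 < m) (hs : 0 < s)
    (hlin : ∀ z, 0 ≤ z → g z = z / s) (hx : 0 ≤ x) (hxy : x ≤ y) (hu : 0 < u)
    (huK : u ≤ ((y - x) / s) ^ 2) (hKM : ((y - x) / s) ^ 2 ≤ 32 * M * u) :
    (exp (-M) * (1 - exp (-(1 / 4)))) ^ 2 * ((y - x) / 4) ≤
      ∫ z, (Eminus g u y z - Eminus g u x z) ^ 2 := by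
  have hr : 1 / 32 ≤ ((y - x) / s) ^ 2 / (32 * u) := by
    rw [div_le_div_iff₀ (by norm_num) (by positivity)]; linarith
  have hrM : ((y - x) / s) ^ 2 / (32 * u) ≤ M := by
    rw [div_le_iff₀ (by positivity)]; linarith
  have hδ : 0 ≤ exp (-M) * (1 - exp (-(1 / 4))) :=
    mul_nonneg (exp_nonneg _) (sub_nonneg.2 (exp_le_one_iff.2 (by norm_num)))
  calc (exp (-M) * (1 - exp (-(1 / 4)))) ^ 2 * ((y - x) / 4)
      = (exp (-M) * (1 - exp (-(1 / 4)))) ^ 2 * volume.real (Icc (y - (y - x) / 4) y) := by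
        rw [Real.volume_real_Icc_of_le (by linarith)]; ring_nf
    _ ≤ ∫ z in univ, (Eminus g u y z - Eminus g u x z) ^ 2 :=
        mul_measureReal_le_setIntegral (subset_univ _) measurableSet_Icc measure_Icc_lt_top.ne
          (integrable_Eminus_sub_sq hg hexp hm hu).integrableOn
          (Filter.Eventually.of_forall fun z => sq_nonneg _) fun z hz =>
            pow_le_pow_left₀ hδ ((exp_neg_mul_one_sub_le_exp_neg_sub_exp_neg_nine_mul hr hrM).trans
              (exp_neg_sub_exp_neg_nine_mul_le_Eminus_sub hs hlin hx hu hz)) 2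
    _ = ∫ z, (Eminus g u y z - Eminus g u x z) ^ 2 := setIntegral_univ

theorem exists_pos_mul_sub_le_Eminus_increment {s A t : ℝ} (hg : Measurable g)
    (hexp : ∀ z w, m * |z - w| ≤ |g z - g w|) (hm : 0 < m) (hs : 0 < s)
    (hlin : ∀ z, 0 ≤ z → g z = z / s) (ht : 0 < t) :
    ∃ c > 0, ∀ x y, 0 ≤ x → x < y → y ≤ A →
      c * (y - x) ≤ ∫ u in Ioc 0 t, 1 / (2 * π * u) *
        ∫ z, (Eminus g u y z - Eminus g u x z) ^ 2 := by
  set M := max (1 / 16) (A ^ 2 / (s ^ 2 * (16 * t)))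
  set δ := exp (-M) * (1 - exp (-(1 / 4)))
  have hM : 1 / 16 ≤ M := le_max_left _ _
  have hδ : 0 < δ := mul_pos (exp_pos _) (sub_pos.2 (exp_lt_one_iff.2 (by norm_num)))
  refine ⟨δ ^ 2 / (16 * π), by positivity, fun x y hx hxy hyA => ?_⟩
  set K := ((y - x) / s) ^ 2 with hK_def
  have hK : 0 < K := by have := sub_pos.2 hxy; positivity
  -- Times `u ∈ (T / 2, T]` are short enough for the kernels at `x` and `y` to separate, and long
  -- enough for `K / (32 u) ≤ M` uniformly in `x, y ∈ [0, A]`.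
  set T := min t K
  have hT : 0 < T := lt_min ht hK
  have hKT : K ≤ 16 * M * T := by
    rcases min_cases t K with ⟨hTt, -⟩ | ⟨hTK, -⟩
    · have hMA : A ^ 2 / (s ^ 2 * (16 * t)) ≤ M := le_max_right _ _
      have hyx : (y - x) ^ 2 ≤ A ^ 2 := pow_le_pow_left₀ (by linarith) (by linarith) 2
      rw [div_le_iff₀ (by positivity)] at hMA
      rw [show T = t from hTt, hK_def, div_pow, div_le_iff₀ (by positivity)]
      nlinarith
    · rw [show T = K from hTK]; nlinarith
  have hwindow : ∀ u ∈ Ioc (T / 2) T, 1 / (2 * π * T) * (δ ^ 2 * ((y - x) / 4)) ≤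
      1 / (2 * π * u) * ∫ z, (Eminus g u y z - Eminus g u x z) ^ 2 := by
    rintro u ⟨hu₁, hu₂⟩
    have hu : 0 < u := by linarith
    refine mul_le_mul (one_div_le_one_div_of_le (by positivity) (by gcongr)) ?_
      (by positivity) (by positivity)
    exact mul_sub_le_integral_Eminus_sub_sq hg hexp hm hs hlin hx hxy.le hu
      (hu₂.trans (min_le_right _ _)) (by nlinarith)
  calc δ ^ 2 / (16 * π) * (y - x)
      = 1 / (2 * π * T) * (δ ^ 2 * ((y - x) / 4)) * volume.real (Ioc (T / 2) T) := by
        rw [Real.volume_real_Ioc_of_le (by linarith)]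
        field_simp
        ring
    _ ≤ _ := mul_measureReal_le_setIntegral (Ioc_subset_Ioc (by positivity) (min_le_left _ _))
        measurableSet_Ioc measure_Ioc_lt_top.ne (integrableOn_Ioc_Eminus_increment hg hexp hm t)
        ((ae_restrict_mem measurableSet_Ioc).mono fun u hu =>
          mul_nonneg (one_div_nonneg.2 (by have := hu.1; positivity))
            (integral_nonneg fun z => sq_nonneg _))
        hwindow

end Eminus

theorem Eminus_increment_lower_bound_general (a₁ a₂ : ℝ) (ha₁ : 0 < a₁) (ha₂ : 0 < a₂)
    (f : ℝ → ℝ)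
    (hf : ∀ z : ℝ, f z = if z ≤ 0 then z / Real.sqrt a₁ else z / Real.sqrt a₂)
    (E : ℝ → ℝ → ℝ → ℝ)
    (hE : ∀ u x z : ℝ, E u x z = Real.exp (-(f z - f x) ^ 2 / (2 * u)))
    (A t : ℝ) (ht : 0 < t) :
    ∃ c : ℝ, 0 < c ∧ ∀ x ∈ Set.Icc (0 : ℝ) A, ∀ y ∈ Set.Icc (0 : ℝ) A,
      c * |y - x| ≤ ∫ u in Set.Ioc (0 : ℝ) t, (1 / (2 * Real.pi * u)) *
          ∫ z : ℝ, |E u y z - E u x z| ^ 2 := by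
  have hf' : f = piecewiseLinear √a₁ √a₂ := funext hf
  have hE' : E = Eminus f := funext fun u => funext fun x => funext fun z => hE u x z
  subst hf' hE'
  have hs₁ : 0 < √a₁ := sqrt_pos.2 ha₁
  have hs₂ : 0 < √a₂ := sqrt_pos.2 ha₂
  obtain ⟨c, hc, hlb⟩ := exists_pos_mul_sub_le_Eminus_increment (A := A)
    (measurable_piecewiseLinear _ _) (min_inv_mul_abs_sub_le_abs_piecewiseLinear_sub _ _)
    (lt_min (inv_pos.2 hs₁) (inv_pos.2 hs₂)) hs₂ (fun z => piecewiseLinear_of_nonneg _ _) ht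
  refine ⟨c, hc, fun x hx y hy => ?_⟩
  simp_rw [sq_abs]
  wlog hxy : x ≤ y generalizing x y
  · simpa only [abs_sub_comm, sub_sq_comm] using this y hy x hx (le_of_not_ge hxy)
  rcases hxy.eq_or_lt with rfl | hlt
  · simp
  · rw [abs_of_pos (sub_pos.2 hlt)]
    exact hlb x y hx.1 hlt hy.2

theorem Eminus_increment_lower_bound (a₁ a₂ : ℝ) (ha₁ : 0 < a₁) (ha₂ : 0 < a₂)
    (f : ℝ → ℝ)
    (hf : ∀ z : ℝ, f z = if z ≤ 0 then z / Real.sqrt a₁ else z / Real.sqrt a₂)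
    (E : ℝ → ℝ → ℝ → ℝ)
    (hE : ∀ u x z : ℝ, E u x z = Real.exp (-(f z - f x) ^ 2 / (2 * u)))
    (A t : ℝ) (hA : 0 < A) (ht : 0 < t) :
    ∃ c : ℝ, 0 < c ∧ ∀ x ∈ Set.Icc (0 : ℝ) A, ∀ y ∈ Set.Icc (0 : ℝ) A,
      c * |y - x| ≤ ∫ u in Set.Ioc (0 : ℝ) t, (1 / (2 * Real.pi * u)) *
          ∫ z : ℝ, |E u y z - E u x z| ^ 2 :=
  Eminus_increment_lower_bound_general a₁ a₂ ha₁ ha₂ f hf E hE A t ht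
end
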